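/- arXiv:2104.12562 — 3 statements merged into one kernel-verified Lean document; each statement's English description precedes it below -/
import Mathlib

section
/- Let n ≥ 2, let l be a nonzero real number, let p ≥ 2 be a real number, and let φ : ℝ^n \ {0} → ℝ^n \ {0} be the inversion-type map φ(x) = x / ‖x‖^l. Then φ is p-harmonic (i.e. its p-tension field τ_p(φ) = Σ_{i=1}^n ∂_{e_i}( |dφ|^{p-2} · Dφ(·)e_i ) vanishes at every point of ℝ^n \ {0}) if and only if l = (n + p - 2)/(p - 1). -/
open scoped BigOperators

/-- The Hilbert–Schmidt (Frobenius) norm `|dφ(x)|` of the Fréchet derivative of `φ` at `x`. -/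
noncomputable def hsNorm {m n : ℕ}
    (φ : EuclideanSpace ℝ (Fin m) → EuclideanSpace ℝ (Fin n))
    (x : EuclideanSpace ℝ (Fin m)) : ℝ :=
  Real.sqrt (∑ i : Fin m, ‖fderiv ℝ φ x (EuclideanSpace.single i 1)‖ ^ 2)

/-- The `p`-tension field `τ_p(φ)(x) = ∑ i ∂_{eᵢ}( |dφ|^{p-2} · Dφ(·)eᵢ )(x)`. -/
noncomputable def pTension {m n : ℕ} (p : ℝ)
    (φ : EuclideanSpace ℝ (Fin m) → EuclideanSpace ℝ (Fin n))
    (x : EuclideanSpace ℝ (Fin m)) : EuclideanSpace ℝ (Fin n) :=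
  ∑ i : Fin m,
    fderiv ℝ (fun y => hsNorm φ y ^ (p - 2) • fderiv ℝ φ y (EuclideanSpace.single i 1)) x
      (EuclideanSpace.single i 1)

open Real

variable {n : ℕ}

lemma hasFDerivAt_norm_rpow' (t : ℝ) {x : EuclideanSpace ℝ (Fin n)} (hx : x ≠ 0) :
    HasFDerivAt (fun y : EuclideanSpace ℝ (Fin n) => ‖y‖ ^ t)
      ((t * ‖x‖ ^ (t - 2)) • (innerSL ℝ x : EuclideanSpace ℝ (Fin n) →L[ℝ] ℝ)) x := by
  have hxn : ‖x‖ ≠ 0 := norm_ne_zero_iff.mpr hx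
  set N : EuclideanSpace ℝ (Fin n) → ℝ := fun y => (inner ℝ y y : ℝ) with hN
  have h1 : HasFDerivAt N ((2:ℝ) • (innerSL ℝ x)) x := by
    have := (hasFDerivAt_id x).inner ℝ (hasFDerivAt_id x)
    refine this.congr_fderiv ?_
    ext v
    simp [real_inner_comm, two_smul, mul_comm]
  have h2 : HasDerivAt (fun s : ℝ => s ^ (t/2)) ((t/2) * (N x) ^ (t/2 - 1)) (N x) := by
    apply Real.hasDerivAt_rpow_const (Or.inl ?_)
    rw [hN]; simp only [real_inner_self_eq_norm_sq]
    positivity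
  have h3 := h2.comp_hasFDerivAt x h1
  have heq : (fun y : EuclideanSpace ℝ (Fin n) => ‖y‖ ^ t)
      = fun y : EuclideanSpace ℝ (Fin n) => (N y) ^ (t/2) := by
    funext y
    rw [hN]
    simp only [real_inner_self_eq_norm_sq]
    rw [← Real.rpow_natCast ‖y‖ 2, ← Real.rpow_mul (norm_nonneg y)]
    congr 1; ring
  have h4 : (t * ‖x‖ ^ (t - 2)) • (innerSL ℝ x : EuclideanSpace ℝ (Fin n) →L[ℝ] ℝ)
      = ((t/2) * (N x) ^ (t/2 - 1)) • (2:ℝ) • (innerSL ℝ x) := by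
    rw [smul_smul]
    congr 1
    rw [hN]
    simp only [real_inner_self_eq_norm_sq]
    rw [← Real.rpow_natCast ‖x‖ 2, ← Real.rpow_mul (norm_nonneg x)]
    have h5 : ((2:ℕ):ℝ) * (t/2 - 1) = t - 2 := by push_cast; ring
    rw [h5]; ring
  rw [heq, h4]
  exact h3

noncomputable def Dphi (l : ℝ) (x : EuclideanSpace ℝ (Fin n)) :
    EuclideanSpace ℝ (Fin n) →L[ℝ] EuclideanSpace ℝ (Fin n) :=
  ‖x‖ ^ (-l) • ContinuousLinearMap.id ℝ (EuclideanSpace ℝ (Fin n)) +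
    ((-l * ‖x‖ ^ (-l - 2)) • (innerSL ℝ x)).smulRight x

lemma hasFDerivAt_phi (l : ℝ) {x : EuclideanSpace ℝ (Fin n)} (hx : x ≠ 0) :
    HasFDerivAt (fun y : EuclideanSpace ℝ (Fin n) => ‖y‖ ^ (-l) • y) (Dphi l x) x := by
  have h := (hasFDerivAt_norm_rpow' (-l) hx).smul (hasFDerivAt_id x)
  exact h.congr_fderiv (by simp [Dphi])

lemma Dphi_apply (l : ℝ) (x v : EuclideanSpace ℝ (Fin n)) :
    Dphi l x v = ‖x‖ ^ (-l) • v + (-l * ‖x‖ ^ (-l - 2) * (inner ℝ x v : ℝ)) • x := by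
  simp [Dphi, smul_smul]

lemma fderiv_phi (l : ℝ) {x : EuclideanSpace ℝ (Fin n)} (hx : x ≠ 0) :
    fderiv ℝ (fun y : EuclideanSpace ℝ (Fin n) => ‖y‖ ^ (-l) • y) x = Dphi l x :=
  (hasFDerivAt_phi l hx).fderiv


lemma rp_sq {r : ℝ} (hr : 0 < r) (s : ℝ) : r ^ (s * 2) = (r ^ s) ^ (2:ℕ) := by
  rw [Real.rpow_mul hr.le, show ((2:ℝ)) = ((2:ℕ):ℝ) by norm_num, Real.rpow_natCast]

lemma rp_sub_two {r : ℝ} (hr : 0 < r) (s : ℝ) : r ^ (s - 2) = r ^ s / r ^ (2:ℕ) := by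
  rw [Real.rpow_sub hr, show ((2:ℝ)) = ((2:ℕ):ℝ) by norm_num, Real.rpow_natCast]

variable {n : ℕ}

lemma sum_single_smul (x : EuclideanSpace ℝ (Fin n)) :
    ∑ i : Fin n, (x i) • EuclideanSpace.single i (1:ℝ) = x := by
  ext j
  have : (∑ i : Fin n, (x i) • EuclideanSpace.single i (1:ℝ)) j
      = ∑ i : Fin n, ((x i) • EuclideanSpace.single i (1:ℝ)) j := by
    simp only [WithLp.ofLp_sum, Finset.sum_apply]
  rw [this]
  simp [EuclideanSpace.single_apply]

lemma sum_sq_eq (x : EuclideanSpace ℝ (Fin n)) : ∑ i : Fin n, (x i)^2 = ‖x‖^2 := by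
  rw [EuclideanSpace.norm_eq, Real.sq_sqrt (by positivity)]
  simp [sq_abs]

lemma inner_single (x : EuclideanSpace ℝ (Fin n)) (i : Fin n) :
    (inner ℝ x (EuclideanSpace.single i (1:ℝ)) : ℝ) = x i := by
  rw [EuclideanSpace.inner_single_right]
  simp


lemma Dphi_single_sq (l : ℝ) {x : EuclideanSpace ℝ (Fin n)} (hx : x ≠ 0) (i : Fin n) :
    ‖Dphi l x (EuclideanSpace.single i 1)‖ ^ 2
      = ‖x‖ ^ (-(2*l)) + ((l^2 - 2*l) * ‖x‖ ^ (-(2*l) - 2)) * (x i)^2 := by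
  have hr : (0:ℝ) < ‖x‖ := norm_pos_iff.mpr hx
  rw [Dphi_apply, inner_single, @norm_add_sq_real]
  simp [norm_smul, real_inner_smul_left, real_inner_smul_right,
    EuclideanSpace.inner_single_left, EuclideanSpace.inner_single_right, mul_pow, abs_of_pos]
  have h1 : ‖x‖ ^ (-l - 2) = ‖x‖ ^ (-l) / ‖x‖ ^ (2:ℕ) := rp_sub_two hr (-l)
  have h2 : ‖x‖ ^ (-(2*l)) = (‖x‖ ^ (-l)) ^ (2:ℕ) := by
    rw [show -(2*l) = (-l) * 2 by ring]; exact rp_sq hr (-l)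
  have h3 : ‖x‖ ^ (-(2*l) - 2) = (‖x‖ ^ (-l)) ^ (2:ℕ) / ‖x‖ ^ (2:ℕ) := by
    rw [rp_sub_two hr, h2]
  rw [h1, h2, h3]
  have hrn : ‖x‖ ^ (2:ℕ) ≠ 0 := by positivity
  field_simp
  ring

lemma hs_eq (l : ℝ) {x : EuclideanSpace ℝ (Fin n)} (hx : x ≠ 0) :
    hsNorm (fun y : EuclideanSpace ℝ (Fin n) => ‖y‖ ^ (-l) • y) x
      = Real.sqrt ((n:ℝ) - 2*l + l^2) * ‖x‖ ^ (-l) := by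
  have hr : (0:ℝ) < ‖x‖ := norm_pos_iff.mpr hx
  rw [hsNorm, fderiv_phi l hx]
  have hsum : ∑ i : Fin n, ‖Dphi l x (EuclideanSpace.single i 1)‖ ^ 2
      = ((n:ℝ) - 2*l + l^2) * ‖x‖ ^ (-(2*l)) := by
    rw [Finset.sum_congr rfl fun i _ => Dphi_single_sq l hx i]
    rw [Finset.sum_add_distrib, Finset.sum_const, ← Finset.mul_sum, sum_sq_eq]
    have h3 : ‖x‖ ^ (-(2*l) - 2) = ‖x‖ ^ (-(2*l)) / ‖x‖ ^ (2:ℕ) := rp_sub_two hr _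
    rw [h3, Finset.card_univ, Fintype.card_fin]
    have hrn : ‖x‖ ^ (2:ℕ) ≠ 0 := by positivity
    field_simp
    ring
  rw [hsum]
  have h2 : ‖x‖ ^ (-(2*l)) = (‖x‖ ^ (-l)) ^ (2:ℕ) := by
    rw [show -(2*l) = (-l) * 2 by ring]; exact rp_sq hr (-l)
  have hc : (0:ℝ) ≤ (n:ℝ) - 2*l + l^2 := by
    have hn1 : (1:ℝ) ≤ (n:ℝ) := by
      rcases Nat.eq_zero_or_pos n with h|h
      · subst h
        exact absurd (by ext i; exact absurd i.2 (by omega) : x = 0) hx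
      · exact_mod_cast h
    nlinarith [sq_nonneg (l - 1)]
  rw [h2, Real.sqrt_mul hc, Real.sqrt_sq (by positivity)]

lemma psi_formula (l p : ℝ) {y : EuclideanSpace ℝ (Fin n)} (hy : y ≠ 0) (i : Fin n) :
    hsNorm (fun z : EuclideanSpace ℝ (Fin n) => ‖z‖ ^ (-l) • z) y ^ (p-2)
        • fderiv ℝ (fun z : EuclideanSpace ℝ (Fin n) => ‖z‖ ^ (-l) • z) y
            (EuclideanSpace.single i 1)
      = ((Real.sqrt ((n:ℝ) - 2*l + l^2) ^ (p-2)) * ‖y‖ ^ (-(l*(p-1))))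
            • EuclideanSpace.single i (1:ℝ)
        + ((Real.sqrt ((n:ℝ) - 2*l + l^2) ^ (p-2)) * (-l)
            * (‖y‖ ^ (-(l*(p-1)) - 2) * y i)) • y := by
  have hr : (0:ℝ) < ‖y‖ := norm_pos_iff.mpr hy
  rw [hs_eq l hy, fderiv_phi l hy, Dphi_apply, inner_single]
  rw [Real.mul_rpow (Real.sqrt_nonneg _) (Real.rpow_nonneg hr.le _)]
  rw [← Real.rpow_mul hr.le]
  rw [smul_add, smul_smul, smul_smul]
  congr 1
  · congr 1
    rw [mul_assoc, ← Real.rpow_add hr]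
    congr 2
    ring
  · congr 1
    rw [show -(l*(p-1)) - 2 = (-l * (p-2)) + (-l - 2) by ring, Real.rpow_add hr]
    ring

lemma tension_term (l p : ℝ) {x : EuclideanSpace ℝ (Fin n)} (hx : x ≠ 0) (i : Fin n) :
    fderiv ℝ (fun y : EuclideanSpace ℝ (Fin n) =>
        hsNorm (fun z : EuclideanSpace ℝ (Fin n) => ‖z‖ ^ (-l) • z) y ^ (p-2)
          • fderiv ℝ (fun z : EuclideanSpace ℝ (Fin n) => ‖z‖ ^ (-l) • z) y
              (EuclideanSpace.single i 1)) x (EuclideanSpace.single i 1)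
      = (((Real.sqrt ((n:ℝ) - 2*l + l^2) ^ (p-2)) * (-(l*(p-1)) - l)
            * (‖x‖ ^ (-(l*(p-1)) - 2) * x i)) • EuclideanSpace.single i (1:ℝ))
        + ((Real.sqrt ((n:ℝ) - 2*l + l^2) ^ (p-2)) * (-l)
            * (‖x‖ ^ (-(l*(p-1)) - 2)
               + (-(l*(p-1)) - 2) * ‖x‖ ^ (-(l*(p-1)) - 2 - 2) * (x i)^2)) • x := by
  set a : ℝ := l*(p-1) with ha
  set C : ℝ := Real.sqrt ((n:ℝ) - 2*l + l^2) ^ (p-2) with hC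
  have hev : (fun y : EuclideanSpace ℝ (Fin n) =>
        hsNorm (fun z : EuclideanSpace ℝ (Fin n) => ‖z‖ ^ (-l) • z) y ^ (p-2)
          • fderiv ℝ (fun z : EuclideanSpace ℝ (Fin n) => ‖z‖ ^ (-l) • z) y
              (EuclideanSpace.single i 1))
      =ᶠ[nhds x] (fun y : EuclideanSpace ℝ (Fin n) =>
          (C * ‖y‖ ^ (-a)) • EuclideanSpace.single i (1:ℝ)
            + (C * (-l) * (‖y‖ ^ (-a - 2) * y i)) • y) := by
    filter_upwards [eventually_ne_nhds hx] with y hy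
    exact psi_formula l p hy i
  rw [Filter.EventuallyEq.fderiv_eq hev]
  have h1 : HasFDerivAt
      (fun y : EuclideanSpace ℝ (Fin n) => (C * ‖y‖ ^ (-a)) • EuclideanSpace.single i (1:ℝ))
      ((C • ((-a * ‖x‖ ^ (-a - 2)) • innerSL ℝ x)).smulRight (EuclideanSpace.single i (1:ℝ))) x :=
    ((hasFDerivAt_norm_rpow' (-a) hx).const_mul C).smul_const _
  have hproj : HasFDerivAt (fun y : EuclideanSpace ℝ (Fin n) => y i)
      (EuclideanSpace.proj i : EuclideanSpace ℝ (Fin n) →L[ℝ] ℝ) x := by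
    have h := (EuclideanSpace.proj (𝕜 := ℝ) i).hasFDerivAt (x := x)
    convert h using 2
    rfl
  have hm := ((hasFDerivAt_norm_rpow' (-a - 2) hx).mul hproj).const_mul (C * (-l))
  have h2 : HasFDerivAt
      (fun y : EuclideanSpace ℝ (Fin n) => (C * (-l) * (‖y‖ ^ (-a - 2) * y i)) • y)
      ((C * (-l) * (‖x‖ ^ (-a - 2) * x i)) • ContinuousLinearMap.id ℝ (EuclideanSpace ℝ (Fin n))
        + ((C * (-l)) • (‖x‖ ^ (-a - 2) • (EuclideanSpace.proj i : EuclideanSpace ℝ (Fin n) →L[ℝ] ℝ)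
            + x i • ((-a - 2) * ‖x‖ ^ (-a - 2 - 2)) • innerSL ℝ x)).smulRight x) x := by
    exact hm.smul (hasFDerivAt_id x)
  rw [(show HasFDerivAt (fun y : EuclideanSpace ℝ (Fin n) => (C * ‖y‖ ^ (-a)) • EuclideanSpace.single i (1:ℝ)
              + (C * (-l) * (‖y‖ ^ (-a - 2) * y i)) • y) _ x from h1.add h2).fderiv]
  simp only [ContinuousLinearMap.add_apply, ContinuousLinearMap.smulRight_apply,
    ContinuousLinearMap.smul_apply, ContinuousLinearMap.id_apply, innerSL_apply_apply,
    inner_single, smul_eq_mul]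
  have hproj1 : (EuclideanSpace.proj i : EuclideanSpace ℝ (Fin n) →L[ℝ] ℝ)
      (EuclideanSpace.single i (1:ℝ)) = 1 := by
    simp [EuclideanSpace.single_apply]
  rw [hproj1, ← add_assoc, ← add_smul]
  congr 1
  · ring
  · ring


lemma tension_eq (l p : ℝ) {x : EuclideanSpace ℝ (Fin n)} (hx : x ≠ 0) :
    pTension p (fun y : EuclideanSpace ℝ (Fin n) => ‖y‖ ^ (-l) • y) x
      = ((Real.sqrt ((n:ℝ) - 2*l + l^2) ^ (p-2)) * l * (l*(p-1) - ((n:ℝ)+p-2))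
          * ‖x‖ ^ (-(l*(p-1)) - 2)) • x := by
  have hr : (0:ℝ) < ‖x‖ := norm_pos_iff.mpr hx
  set C : ℝ := Real.sqrt ((n:ℝ) - 2*l + l^2) ^ (p-2) with hC
  set R : ℝ := ‖x‖ ^ (-(l*(p-1)) - 2) with hR
  set S : ℝ := ‖x‖ ^ (-(l*(p-1)) - 2 - 2) with hS
  rw [pTension, Finset.sum_congr rfl fun i _ => tension_term l p hx i]
  rw [Finset.sum_add_distrib]
  have e1 : ∀ i : Fin n, (C * (-(l*(p-1)) - l) * (R * x i)) • EuclideanSpace.single i (1:ℝ)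
      = (C * (-(l*(p-1)) - l) * R) • ((x i) • EuclideanSpace.single i (1:ℝ)) := by
    intro i; rw [smul_smul]; congr 1; ring
  rw [Finset.sum_congr rfl fun i _ => e1 i, ← Finset.smul_sum, sum_single_smul]
  have e2 : ∑ i : Fin n, (C * (-l) * (R + (-(l*(p-1)) - 2) * S * (x i)^2)) • x
      = (C * (-l) * ((n:ℝ) * R + (-(l*(p-1)) - 2) * S * ‖x‖^2)) • x := by
    rw [← Finset.sum_smul]
    congr 1
    rw [← Finset.mul_sum, Finset.sum_add_distrib, Finset.sum_const, ← Finset.mul_sum, sum_sq_eq]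
    simp [nsmul_eq_mul]
  rw [e2, ← add_smul]
  congr 1
  have hs2 : S * ‖x‖^2 = R := by
    rw [hS, rp_sub_two hr, hR]
    field_simp
  have : (-(l*(p-1)) - 2) * S * ‖x‖^2 = (-(l*(p-1)) - 2) * R := by
    rw [mul_assoc, hs2]
  rw [this]
  ring


/-- for `n ≥ 2`, `l ≠ 0` and `p ≥ 2`, the inversion-type map
`φ(x) = x/‖x‖ˡ = ‖x‖^(-l) • x` on `ℝⁿ \ {0}` is `p`-harmonic (its `p`-tension field vanishes at
every `x ≠ 0`) if and only if `l = (n + p - 2)/(p - 1)`. -/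
theorem inversion_pHarmonic_iff (n : ℕ) (hn : 2 ≤ n) (l p : ℝ) (hl : l ≠ 0) (hp : 2 ≤ p) :
    (∀ x : EuclideanSpace ℝ (Fin n), x ≠ 0 →
        pTension p (fun y : EuclideanSpace ℝ (Fin n) => ‖y‖ ^ (-l) • y) x = 0)
      ↔ l = ((n : ℝ) + p - 2) / (p - 1) := by
  have hn2 : (2:ℝ) ≤ (n:ℝ) := by exact_mod_cast hn
  have hp1 : (0:ℝ) < p - 1 := by linarith
  have hcpos : (0:ℝ) < (n:ℝ) - 2*l + l^2 := by nlinarith [sq_nonneg (l - 1)]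
  have hCpos : (0:ℝ) < Real.sqrt ((n:ℝ) - 2*l + l^2) ^ (p-2) :=
    Real.rpow_pos_of_pos (Real.sqrt_pos.mpr hcpos) _
  constructor
  · intro h
    set x₀ : EuclideanSpace ℝ (Fin n) := EuclideanSpace.single (⟨0, by omega⟩ : Fin n) (1:ℝ)
      with hx₀def
    have hx0 : x₀ ≠ 0 := by
      intro h0
      have : ‖x₀‖ = 0 := by rw [h0, norm_zero]
      rw [hx₀def, EuclideanSpace.norm_single] at this
      norm_num at this
    have hz := h x₀ hx0
    rw [tension_eq l p hx0] at hz
    have hRpos : (0:ℝ) < ‖x₀‖ ^ (-(l*(p-1)) - 2) :=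
      Real.rpow_pos_of_pos (norm_pos_iff.mpr hx0) _
    rcases smul_eq_zero.mp hz with hK | hx
    · have hfac : l*(p-1) - ((n:ℝ)+p-2) = 0 := by
        by_contra hne
        exact (mul_ne_zero (mul_ne_zero (mul_ne_zero (ne_of_gt hCpos) hl) hne)
          (ne_of_gt hRpos)) hK
      rw [eq_div_iff (ne_of_gt hp1)]
      linarith
    · exact absurd hx hx0
  · intro hleq x hx
    rw [tension_eq l p hx]
    have hfac : l*(p-1) - ((n:ℝ)+p-2) = 0 := by
      rw [hleq]
      field_simp
      ring
    rw [hfac]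
    simp
end

section
/- Let n ≥ 1 and let l be a real number. For the map φ : ℝ^n \ {0} → ℝ^n given by φ(x) = x / ‖x‖^l, the gradient of the energy-density function x ↦ |dφ(x)| equals ∇|dφ|(x) = -l c ‖x‖^{-l-2} x for every x ≠ 0, where c = √( (l-1)² + n - 1 ). -/
open scoped BigOperators

lemma normPowAux {n : ℕ} (l : ℝ) (y : EuclideanSpace ℝ (Fin n)) (hy : y ≠ 0) :
    HasFDerivAt (fun z : EuclideanSpace ℝ (Fin n) => ‖z‖ ^ (-l))
      ((-l * ‖y‖ ^ (-l - 2)) • innerSL ℝ y) y := by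
  have hr : (0:ℝ) < ‖y‖ := norm_pos_iff.mpr hy
  have h1 : HasFDerivAt (fun z : EuclideanSpace ℝ (Fin n) => ‖z‖ ^ 2)
      (2 • innerSL ℝ y) y := (hasStrictFDerivAt_norm_sq y).hasFDerivAt
  have h2 : HasDerivAt (fun t : ℝ => t ^ (-l/2))
      ((-l/2) * (‖y‖^2) ^ (-l/2 - 1)) (‖y‖^2) :=
    Real.hasDerivAt_rpow_const (Or.inl (by positivity))
  have h3 := h2.comp_hasFDerivAt y h1
  have heq : (fun z : EuclideanSpace ℝ (Fin n) => (‖z‖ ^ 2) ^ (-l/2))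
      = fun z : EuclideanSpace ℝ (Fin n) => ‖z‖ ^ (-l) := by
    funext z
    rw [← Real.rpow_natCast ‖z‖ 2, ← Real.rpow_mul (norm_nonneg z)]
    congr 1; ring
  simp only [Function.comp_def] at h3
  rw [heq] at h3
  refine h3.congr_fderiv ?_
  ext v
  simp only [ContinuousLinearMap.smul_apply, ContinuousLinearMap.coe_smul',
    Pi.smul_apply, smul_eq_mul]
  have : (‖y‖^2 : ℝ) ^ (-l/2 - 1) = ‖y‖ ^ (-l - 2) := by
    rw [← Real.rpow_natCast ‖y‖ 2, ← Real.rpow_mul (norm_nonneg y)]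
    ring_nf
  rw [this]; ring

lemma phiDeriv {n : ℕ} (l : ℝ) (y : EuclideanSpace ℝ (Fin n)) (hy : y ≠ 0) :
    HasFDerivAt (fun z : EuclideanSpace ℝ (Fin n) => ‖z‖ ^ (-l) • z)
      (‖y‖ ^ (-l) • ContinuousLinearMap.id ℝ _ +
        ((-l * ‖y‖ ^ (-l - 2)) • innerSL ℝ y).smulRight y) y :=
  (normPowAux l y hy).smul (hasFDerivAt_id y)

lemma hsNormVal {n : ℕ} (hn : 1 ≤ n) (l : ℝ) (y : EuclideanSpace ℝ (Fin n)) (hy : y ≠ 0) :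
    hsNorm (fun z : EuclideanSpace ℝ (Fin n) => ‖z‖ ^ (-l) • z) y
      = Real.sqrt ((l - 1) ^ 2 + (n : ℝ) - 1) * ‖y‖ ^ (-l) := by
  have hr : (0:ℝ) < ‖y‖ := norm_pos_iff.mpr hy
  have hD := (phiDeriv l y hy).fderiv
  unfold hsNorm
  rw [hD]
  have hu : (0:ℝ) ≤ ‖y‖ ^ (-l) := Real.rpow_nonneg (norm_nonneg y) _
  set u : ℝ := ‖y‖ ^ (-l) with hudef
  set v : ℝ := ‖y‖ ^ (-l - 2) with hvdef
  have huv : v * ‖y‖ ^ 2 = u := by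
    rw [hudef, hvdef, ← Real.rpow_natCast ‖y‖ 2, ← Real.rpow_add hr]
    norm_num
  have key : ∀ i : Fin n,
      ‖(u • ContinuousLinearMap.id ℝ (EuclideanSpace ℝ (Fin n)) +
        ((-l * v) • innerSL ℝ y).smulRight y) (EuclideanSpace.single i 1)‖ ^ 2
      = u ^ 2 + (-(2*l)*u*v + l^2*v^2*‖y‖^2) * (y i)^2 := by
    intro i
    have happ : (u • ContinuousLinearMap.id ℝ (EuclideanSpace ℝ (Fin n)) +
        ((-l * v) • innerSL ℝ y).smulRight y) (EuclideanSpace.single i 1)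
        = u • (EuclideanSpace.single i 1 : EuclideanSpace ℝ (Fin n))
          + ((-l * v) * (y i)) • y := by
      simp only [ContinuousLinearMap.add_apply, ContinuousLinearMap.smul_apply,
        ContinuousLinearMap.id_apply, ContinuousLinearMap.smulRight_apply,
        innerSL_apply_apply, EuclideanSpace.inner_single_right, ← hudef, ← hvdef]
      simp [mul_comm, smul_smul]
    rw [happ, @norm_add_sq_real]
    have h1 : ‖u • (EuclideanSpace.single i 1 : EuclideanSpace ℝ (Fin n))‖^2 = u^2 := by
      rw [norm_smul]; simp [EuclideanSpace.norm_single, sq_abs]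
    have h2 : (inner ℝ (u • (EuclideanSpace.single i 1 : EuclideanSpace ℝ (Fin n)))
        (((-l * v) * (y i)) • y) : ℝ) = u * ((-l*v) * y i) * y i := by
      rw [real_inner_smul_left, real_inner_smul_right, EuclideanSpace.inner_single_left]
      ring_nf
      simp
    have h3 : ‖((-l * v) * (y i)) • y‖^2 = ((-l*v) * y i)^2 * ‖y‖^2 := by
      rw [norm_smul, mul_pow, Real.norm_eq_abs, sq_abs]
    rw [h1, h2, h3]; ring
  simp only [key]
  rw [Finset.sum_add_distrib, Finset.sum_const, ← Finset.mul_sum]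
  have hsum : ∑ i : Fin n, (y i)^2 = ‖y‖^2 := by
    rw [EuclideanSpace.norm_eq, Real.sq_sqrt (by positivity)]
    simp
  rw [hsum]
  have hc : (Finset.univ.card (α := Fin n)) • u^2 + (-(2*l)*u*v + l^2*v^2*‖y‖^2) * ‖y‖^2
      = ((l-1)^2 + (n:ℝ) - 1) * u^2 := by
    simp only [Finset.card_univ, Fintype.card_fin, nsmul_eq_mul]
    have e2 : v^2 * (‖y‖^2)^2 = u^2 := by rw [← huv]; ring
    linear_combination (-2*l*u) * huv + l^2 * e2
  rw [hc, Real.sqrt_mul (by nlinarith [sq_nonneg (l-1),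
    (show (1:ℝ) ≤ n by exact_mod_cast hn)] : (0:ℝ) ≤ (l-1)^2 + (n:ℝ) - 1), Real.sqrt_sq hu]

/-- for the map `φ(x) = x/‖x‖ˡ = ‖x‖^(-l) • x` on `ℝⁿ \ {0}`, the Euclidean gradient
of the energy-density `x ↦ |dφ(x)|` equals `∇|dφ|(x) = -l c ‖x‖^(-l-2) x` at every `x ≠ 0`,
where `c = √((l-1)² + n - 1)`. -/
theorem gradient_hsNorm_inversion (n : ℕ) (hn : 1 ≤ n) (l : ℝ)
    (x : EuclideanSpace ℝ (Fin n)) (hx : x ≠ 0) :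
    gradient (hsNorm (fun y : EuclideanSpace ℝ (Fin n) => ‖y‖ ^ (-l) • y)) x
      = (-(l * Real.sqrt ((l - 1) ^ 2 + (n : ℝ) - 1)) * ‖x‖ ^ (-l - 2)) • x := by
  set c : ℝ := Real.sqrt ((l - 1) ^ 2 + (n : ℝ) - 1) with hc
  -- gradient of the model function
  have hg : HasGradientAt (fun y : EuclideanSpace ℝ (Fin n) => c * ‖y‖ ^ (-l))
      ((-(l * c) * ‖x‖ ^ (-l - 2)) • x) x := by
    have hf := (normPowAux l x hx).const_mul c
    rw [hasGradientAt_iff_hasFDerivAt]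
    refine hf.congr_fderiv ?_
    ext v
    simp only [InnerProductSpace.toDual_apply_apply, ContinuousLinearMap.smul_apply,
      innerSL_apply_apply, smul_eq_mul]
    rw [real_inner_smul_left]
    ring
  -- the two functions agree near x
  have hev : hsNorm (fun y : EuclideanSpace ℝ (Fin n) => ‖y‖ ^ (-l) • y)
      =ᶠ[nhds x] fun y => c * ‖y‖ ^ (-l) := by
    filter_upwards [IsOpen.mem_nhds isOpen_compl_singleton hx] with y hy
    exact hsNormVal hn l y hy
  have h2 : HasGradientAt (hsNorm (fun y : EuclideanSpace ℝ (Fin n) => ‖y‖ ^ (-l) • y))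
      ((-(l * c) * ‖x‖ ^ (-l - 2)) • x) x :=
    hg.congr_of_eventuallyEq hev
  exact h2.gradient
end

section
/- Let n ≥ 2, let l be a real number, and let p ≥ 2 be a real number. For the map φ : ℝ^n \ {0} → ℝ^n given by φ(x) = x / ‖x‖^l, the p-tension field satisfies, at every x ≠ 0: τ_p(φ)(x) = c^{p-2} · l · ( (l - n) + (p-2)(l-1) ) · ‖x‖^{-l(p-1)-2} x, where c = √( (l-1)² + n - 1 ) and τ_p(φ) = Σ_{i=1}^n ∂_{e_i}( |dφ|^{p-2} Dφ(·)e_i ). -/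
open scoped BigOperators

variable {n : ℕ}

local notation "E" => EuclideanSpace ℝ (Fin n)

theorem myNormRpow (r : ℝ) {x : E} (hx : x ≠ 0) :
    HasFDerivAt (fun y : E => ‖y‖ ^ r)
      ((r * ‖x‖ ^ (r - 2)) • innerSL ℝ x) x := by
  have hnx : (0:ℝ) < ‖x‖ := norm_pos_iff.2 hx
  have h2 : (‖x‖ : ℝ) ^ (2:ℕ) ≠ 0 := pow_ne_zero _ hnx.ne'
  have h := ((hasFDerivAt_id x).norm_sq).rpow_const (p := r/2) (Or.inl (by simpa using h2))
  have heq : (fun y : E => (‖y‖ ^ 2) ^ (r/2)) = fun y => ‖y‖ ^ r := by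
    funext y
    rw [← Real.rpow_natCast ‖y‖ 2, ← Real.rpow_mul (norm_nonneg y)]
    push_cast
    rw [show (2:ℝ) * (r/2) = r by ring]
  simp only [id_eq] at h
  rw [heq] at h
  refine h.congr_fderiv ?_
  ext v
  simp only [ContinuousLinearMap.smul_apply, ContinuousLinearMap.comp_apply,
    ContinuousLinearMap.smul_apply, ContinuousLinearMap.id_apply, smul_eq_mul]
  have : (‖x‖ ^ 2 : ℝ) ^ (r / 2 - 1) = ‖x‖ ^ (r - 2) := by
    rw [← Real.rpow_natCast ‖x‖ 2, ← Real.rpow_mul (norm_nonneg x)]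
    push_cast
    rw [show (2:ℝ) * (r/2 - 1) = r - 2 by ring]
  rw [this]
  ring

theorem phiHasDeriv (l : ℝ) {y : E} (hy : y ≠ 0) :
    HasFDerivAt (fun z : E => ‖z‖ ^ (-l) • z)
      (‖y‖ ^ (-l) • ContinuousLinearMap.id ℝ E
        + (((-l) * ‖y‖ ^ (-l - 2)) • innerSL ℝ y).smulRight y) y := by
  have h := (myNormRpow (-l) hy).smul (hasFDerivAt_id y)
  simp only [id_eq] at h
  exact h

theorem phiDerivApply (l : ℝ) {y : E} (hy : y ≠ 0) (i : Fin n) :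
    fderiv ℝ (fun z : E => ‖z‖ ^ (-l) • z) y (EuclideanSpace.single i 1)
      = ‖y‖ ^ (-l) • EuclideanSpace.single i 1 + ((-l) * ‖y‖ ^ (-l - 2) * y i) • y := by
  rw [(phiHasDeriv l hy).fderiv]
  simp only [ContinuousLinearMap.add_apply, ContinuousLinearMap.smul_apply,
    ContinuousLinearMap.id_apply, ContinuousLinearMap.smulRight_apply, innerSL_apply_apply]
  rw [show (inner ℝ y (EuclideanSpace.single i (1:ℝ)) : ℝ) = y i by
    rw [EuclideanSpace.inner_single_right]; simp]
  rw [smul_eq_mul]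

theorem sum_sq_eq_s7 (y : E) : ∑ i, (y i) ^ 2 = ‖y‖ ^ 2 := by
  rw [← real_inner_self_eq_norm_sq]
  rw [PiLp.inner_apply]
  simp [sq]

theorem sum_single_eq (y : E) : ∑ i, (y i) • EuclideanSpace.single i (1:ℝ) = y := by
  have := (EuclideanSpace.basisFun (Fin n) ℝ).sum_repr y
  simpa [EuclideanSpace.basisFun_apply, EuclideanSpace.basisFun_repr] using this

theorem hsNorm_eq (l : ℝ) (hn : 2 ≤ n) {y : E} (hy : y ≠ 0) :
    hsNorm (fun z : E => ‖z‖ ^ (-l) • z) y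
      = Real.sqrt ((l - 1) ^ 2 + (n : ℝ) - 1) * ‖y‖ ^ (-l) := by
  have ht : (0:ℝ) < ‖y‖ := norm_pos_iff.2 hy
  have htne : (‖y‖:ℝ) ≠ 0 := ht.ne'
  have hsub : ‖y‖ ^ (-l - 2) = ‖y‖ ^ (-l) / ‖y‖ ^ 2 := by
    rw [Real.rpow_sub ht, Real.rpow_two]
  have ha : (0:ℝ) ≤ ‖y‖ ^ (-l) := Real.rpow_nonneg (norm_nonneg y) _
  have hterm : ∀ i : Fin n,
      ‖fderiv ℝ (fun z : E => ‖z‖ ^ (-l) • z) y (EuclideanSpace.single i 1)‖ ^ 2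
      = (‖y‖ ^ (-l)) ^ 2 + ((l ^ 2 - 2 * l) * (‖y‖ ^ (-l)) ^ 2 / ‖y‖ ^ 2) * (y i) ^ 2 := by
    intro i
    rw [phiDerivApply l hy i, norm_add_sq_real, norm_smul, norm_smul,
      EuclideanSpace.norm_single, real_inner_smul_left, real_inner_smul_right]
    have hin : (inner ℝ (EuclideanSpace.single i (1:ℝ)) y : ℝ) = y i := by
      rw [EuclideanSpace.inner_single_left]; simp
    rw [hin]
    simp only [Real.norm_eq_abs, norm_one, mul_one]
    rw [abs_of_nonneg ha, mul_pow, sq_abs, hsub]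
    field_simp
    ring
  unfold hsNorm
  rw [Finset.sum_congr rfl fun i _ => hterm i, Finset.sum_add_distrib,
    Finset.sum_const, ← Finset.mul_sum, sum_sq_eq_s7, Finset.card_univ, Fintype.card_fin,
    nsmul_eq_mul]
  have hco : (0:ℝ) ≤ (l - 1) ^ 2 + (n : ℝ) - 1 := by
    have h2 : (2:ℝ) ≤ n := by exact_mod_cast hn
    nlinarith [sq_nonneg (l - 1)]
  have : (n:ℝ) * (‖y‖ ^ (-l)) ^ 2 + (l ^ 2 - 2 * l) * (‖y‖ ^ (-l)) ^ 2 / ‖y‖ ^ 2 * ‖y‖ ^ 2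
      = ((l - 1) ^ 2 + (n : ℝ) - 1) * (‖y‖ ^ (-l)) ^ 2 := by
    field_simp
    ring
  rw [this, Real.sqrt_mul hco, Real.sqrt_sq ha]


/-- for `n ≥ 2` and `p ≥ 2`, the `p`-tension field of the map
`φ(x) = x/‖x‖ˡ = ‖x‖^(-l) • x` on `ℝⁿ \ {0}` satisfies, at every `x ≠ 0`,
`τ_p(φ)(x) = c^{p-2} l ((l - n) + (p-2)(l-1)) ‖x‖^{-l(p-1)-2} x` with
`c = √((l-1)² + n - 1)`. -/
theorem pTension_inversion (n : ℕ) (hn : 2 ≤ n) (l p : ℝ) (hp : 2 ≤ p)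
    (x : EuclideanSpace ℝ (Fin n)) (hx : x ≠ 0) :
    pTension p (fun y : EuclideanSpace ℝ (Fin n) => ‖y‖ ^ (-l) • y) x
      = (Real.sqrt ((l - 1) ^ 2 + (n : ℝ) - 1) ^ (p - 2)
          * (l * ((l - (n : ℝ)) + (p - 2) * (l - 1)))
          * ‖x‖ ^ (-(l * (p - 1)) - 2)) • x := by
  have ht : (0:ℝ) < ‖x‖ := norm_pos_iff.2 hx
  have htne : (‖x‖:ℝ) ≠ 0 := ht.ne'
  set c : ℝ := Real.sqrt ((l - 1) ^ 2 + (n : ℝ) - 1) with hc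
  have hc0 : (0:ℝ) ≤ c := Real.sqrt_nonneg _
  set c2 : ℝ := c ^ (p - 2) with hc2
  -- eventual equality of the integrand with an explicit function
  have hev : ∀ i : Fin n,
      (fun y : EuclideanSpace ℝ (Fin n) =>
          hsNorm (fun z : EuclideanSpace ℝ (Fin n) => ‖z‖ ^ (-l) • z) y ^ (p - 2) •
            fderiv ℝ (fun z : EuclideanSpace ℝ (Fin n) => ‖z‖ ^ (-l) • z) y
              (EuclideanSpace.single i 1))
        =ᶠ[nhds x]
      (fun y : EuclideanSpace ℝ (Fin n) =>
          (c2 * ‖y‖ ^ (-(l * (p - 1)))) • EuclideanSpace.single i 1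
            + ((c2 * -l) * ‖y‖ ^ (-(l * (p - 1)) - 2) * (y i)) • y) := by
    intro i
    filter_upwards [eventually_ne_nhds hx] with y hy
    have hty : (0:ℝ) < ‖y‖ := norm_pos_iff.2 hy
    rw [hsNorm_eq l hn hy, phiDerivApply l hy i, smul_add, smul_smul, smul_smul]
    have hpow : (c * ‖y‖ ^ (-l)) ^ (p - 2) = c2 * ‖y‖ ^ (-l * (p - 2)) := by
      rw [Real.mul_rpow hc0 (Real.rpow_nonneg (norm_nonneg y) _),
        ← Real.rpow_mul (norm_nonneg y)]
    congr 1
    · rw [hpow, mul_assoc, ← Real.rpow_add hty]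
      ring_nf
    · rw [hpow]
      rw [show c2 * ‖y‖ ^ (-l * (p - 2)) * (-l * ‖y‖ ^ (-l - 2) * y i)
          = (c2 * -l) * (‖y‖ ^ (-l * (p - 2)) * ‖y‖ ^ (-l - 2)) * y i by ring,
        ← Real.rpow_add hty]
      ring_nf
  unfold pTension
  rw [Finset.sum_congr rfl fun i _ => by rw [(hev i).fderiv_eq]]
  -- compute the derivative of the explicit function
  have hG : ∀ i : Fin n,
      fderiv ℝ (fun y : EuclideanSpace ℝ (Fin n) =>
          (c2 * ‖y‖ ^ (-(l * (p - 1)))) • EuclideanSpace.single i 1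
            + ((c2 * -l) * ‖y‖ ^ (-(l * (p - 1)) - 2) * (y i)) • y) x
        (EuclideanSpace.single i 1)
      = ((c2 * -(l * (p - 1)) + c2 * -l) * ‖x‖ ^ (-(l * (p - 1)) - 2) * (x i)) •
          EuclideanSpace.single i 1
        + ((c2 * -l) * ‖x‖ ^ (-(l * (p - 1)) - 2)
            + (c2 * -l) * (-(l * (p - 1)) - 2) * ‖x‖ ^ (-(l * (p - 1)) - 2 - 2) * (x i) ^ 2) •
          x := by
    intro i
    have hg1 : HasFDerivAt
        (fun y : EuclideanSpace ℝ (Fin n) =>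
          (c2 * ‖y‖ ^ (-(l * (p - 1)))) • EuclideanSpace.single i (1:ℝ))
        ((c2 * ‖x‖ ^ (-(l * (p - 1)))) • (0 : EuclideanSpace ℝ (Fin n) →L[ℝ] EuclideanSpace ℝ (Fin n))
          + (c2 • ((-(l * (p - 1)) * ‖x‖ ^ (-(l * (p - 1)) - 2)) • innerSL ℝ x)).smulRight
              (EuclideanSpace.single i 1)) x :=
      ((myNormRpow (-(l * (p - 1))) hx).const_mul c2).smul
        (hasFDerivAt_const (EuclideanSpace.single i (1:ℝ)) x)
    have hu : HasFDerivAt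
        (fun y : EuclideanSpace ℝ (Fin n) => (c2 * -l) * ‖y‖ ^ (-(l * (p - 1)) - 2))
        ((c2 * -l) • (((-(l * (p - 1)) - 2) * ‖x‖ ^ (-(l * (p - 1)) - 2 - 2)) • innerSL ℝ x)) x :=
      (myNormRpow (-(l * (p - 1)) - 2) hx).const_mul (c2 * -l)
    have hv : HasFDerivAt (fun y : EuclideanSpace ℝ (Fin n) => y i)
        (EuclideanSpace.proj (𝕜 := ℝ) i) x :=
      (EuclideanSpace.proj (𝕜 := ℝ) i).hasFDerivAt
    have htm := hu.mul hv
    have hg2 := htm.smul (hasFDerivAt_id x)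
    simp only [id_eq] at hg2
    have hG := (hg1.add hg2).fderiv
    erw [hG]
    simp only [ContinuousLinearMap.add_apply, ContinuousLinearMap.smul_apply,
      ContinuousLinearMap.zero_apply, ContinuousLinearMap.smulRight_apply,
      ContinuousLinearMap.id_apply, innerSL_apply_apply, smul_eq_mul, smul_zero, zero_add, id_eq,
      Pi.mul_apply]
    have hin : (inner ℝ x (EuclideanSpace.single i (1:ℝ)) : ℝ) = x i := by
      rw [EuclideanSpace.inner_single_right]; simp
    have hproj : (EuclideanSpace.proj (𝕜 := ℝ) i) (EuclideanSpace.single i (1:ℝ)) = 1 := by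
      simp
    rw [hin, hproj, ← add_assoc, ← add_smul]
    congr 1
    · ring
    · ring
  rw [Finset.sum_congr rfl fun i _ => hG i]
  rw [Finset.sum_add_distrib]
  have h1 : ∑ i : Fin n, ((c2 * -(l * (p - 1)) + c2 * -l) * ‖x‖ ^ (-(l * (p - 1)) - 2) * (x i)) •
      EuclideanSpace.single i (1:ℝ)
      = ((c2 * -(l * (p - 1)) + c2 * -l) * ‖x‖ ^ (-(l * (p - 1)) - 2)) • x := by
    calc ∑ i : Fin n, ((c2 * -(l * (p - 1)) + c2 * -l) * ‖x‖ ^ (-(l * (p - 1)) - 2) * (x i)) •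
          EuclideanSpace.single i (1:ℝ)
        = ∑ i : Fin n, ((c2 * -(l * (p - 1)) + c2 * -l) * ‖x‖ ^ (-(l * (p - 1)) - 2)) •
            ((x i) • EuclideanSpace.single i (1:ℝ)) := by
          refine Finset.sum_congr rfl fun i _ => ?_
          rw [smul_smul]
      _ = _ := by rw [← Finset.smul_sum, sum_single_eq]
  rw [h1, ← Finset.sum_smul]
  rw [Finset.sum_add_distrib, Finset.sum_const, Finset.card_univ, Fintype.card_fin,
    nsmul_eq_mul, ← Finset.mul_sum, sum_sq_eq_s7]
  rw [← add_smul]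
  congr 1
  have hsub : ‖x‖ ^ (-(l * (p - 1)) - 2 - 2) = ‖x‖ ^ (-(l * (p - 1)) - 2) / ‖x‖ ^ 2 := by
    rw [Real.rpow_sub ht, Real.rpow_two]
  rw [hsub]
  field_simp
  ring
end
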